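/- arXiv:math/0702352 — 2 statements merged into one kernel-verified Lean document; each statement's English description precedes it below -/
import Mathlib

section
/- Let k, ℓ ∈ ℕ. Then |𝒥(k,ℓ)_n| = O(n^{k-1}·F_{n,ℓ}) as n → ∞, where 𝒥(k,ℓ)_n is the set of graphs in 𝒥(k,ℓ) with vertex set [n]. -/
open Finset

/-- `IndSub G H` : `G` is an induced ordered subgraph of `H`, i.e. there is an
order-preserving injection of the vertices preserving adjacency and non-adjacency. -/
def IndSub {m n : ℕ} (G : SimpleGraph (Fin m)) (H : SimpleGraph (Fin n)) : Prop :=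
  ∃ φ : Fin m ↪o Fin n, ∀ i j : Fin m, G.Adj i j ↔ H.Adj (φ i) (φ j)

/-- A hereditary property of ordered graphs: a family of ordered graphs (one set of
graphs on `[n]` for each `n`), closed under taking induced ordered subgraphs.  (Closure
under order-preserving isomorphisms is automatic in this encoding, since the only
order-preserving bijection of `Fin n` is the identity.) -/
structure HerProp where
  mem : ∀ n : ℕ, Set (SimpleGraph (Fin n))
  hered : ∀ {m n : ℕ} (G : SimpleGraph (Fin m)) (H : SimpleGraph (Fin n)),
    IndSub G H → H ∈ mem n → G ∈ mem m

/-- The speed of a property: `n ↦ |P_n|`. -/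
noncomputable def speed (P : HerProp) (n : ℕ) : ℕ := (P.mem n).ncard

/-- Generalized Fibonacci numbers `F_{n,k}` of order `k`:
`F_{0,k} = 1`, `F_{n,k} = F_{n-1,k} + ⋯ + F_{n-k,k}` (terms with negative index are 0). -/
def genFib (k : ℕ) : ℕ → ℕ
  | 0 => 1
  | n + 1 => ∑ i ∈ Finset.range k, if i ≤ n then genFib k (n - i) else 0
decreasing_by omega

/-- `lHom G ℓ x y` : vertices `x` and `y` are `ℓ`-homogeneous in `G`
(`x ∼_ℓ y`), i.e. they have the same neighbourhoods outside `N_ℓ(x) ∪ N_ℓ(y)`. -/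
def lHom {N : ℕ} (G : SimpleGraph (Fin N)) (ℓ : ℕ) (x y : Fin N) : Prop :=
  ∀ v : Fin N, ℓ ≤ ((v : ℤ) - (x : ℤ)).natAbs → ℓ ≤ ((v : ℤ) - (y : ℤ)).natAbs →
    (G.Adj x v ↔ G.Adj y v)

/-- `G` contains a `k`-structure of Type 1. -/
def HasType1 {N : ℕ} (G : SimpleGraph (Fin N)) (k : ℕ) : Prop :=
  ∃ (y : Fin N) (x : Fin (2 * k) → Fin N), StrictMono x ∧
    ((∀ i, y < x i) ∨ (∀ i, x i < y)) ∧
    ∀ i j : Fin (2 * k), (j : ℕ) = (i : ℕ) + 1 → (G.Adj y (x i) ↔ ¬ G.Adj y (x j))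

/-- `G` contains a `k`-structure of Type 2 (2(a) or 2(b)). -/
def HasType2 {N : ℕ} (G : SimpleGraph (Fin N)) (k : ℕ) : Prop :=
  ∃ x y : Fin (2 * k) → Fin N, StrictMono x ∧ (StrictMono y ∨ StrictAnti y) ∧
    (∀ i j, x i < y j) ∧
    ∀ i j : Fin (2 * k), (j : ℕ) = (i : ℕ) + 1 → (G.Adj (x i) (y i) ↔ ¬ G.Adj (x j) (y j))

/-- `G` contains a `(k,ℓ)`-structure of Type 3. -/
def HasType3 {N : ℕ} (G : SimpleGraph (Fin N)) (k ℓ : ℕ) : Prop :=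
  ∃ (x y : Fin (2 * k) → Fin N) (z : Fin (2 * k) → Fin (ℓ - 1) → Fin N),
    (∀ i t, x i < z i t) ∧ (∀ i, StrictMono (z i)) ∧ (∀ i t, z i t < y i) ∧
    (∀ i, x i < y i) ∧
    (∀ i j : Fin (2 * k), (j : ℕ) = (i : ℕ) + 1 → y i < x j) ∧
    ∀ i j : Fin (2 * k), (j : ℕ) = (i : ℕ) + 1 → (G.Adj (x i) (y i) ↔ ¬ G.Adj (x j) (y j))

/-- `S_n(G)` : the number of pairwise non-isomorphic (as ordered graphs) induced ordered
subgraphs of `G` of order `n`. -/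
noncomputable def numSub {N : ℕ} (G : SimpleGraph (Fin N)) (n : ℕ) : ℕ :=
  {H : SimpleGraph (Fin n) | IndSub H G}.ncard
/-- The ordered graph `M^<_I(X,Y)` with `|X| = |Y| = m` (vertices `0,…,m-1` playing the
role of `x_1 < … < x_m` and vertices `m,…,2m-1` the role of `y_1 < … < y_m`). -/
def Mlt (m : ℕ) (I1 I2 I3 I4 : Bool) : SimpleGraph (Fin (2 * m)) :=
  SimpleGraph.fromRel (fun u v =>
    ((u : ℕ) < m ∧ (v : ℕ) < m ∧ I1 = true) ∨
    (m ≤ (u : ℕ) ∧ m ≤ (v : ℕ) ∧ I4 = true) ∨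
    ((u : ℕ) < m ∧ m ≤ (v : ℕ) ∧
      (((u : ℕ) < (v : ℕ) - m ∧ I2 = true) ∨
       ((v : ℕ) - m < (u : ℕ) ∧ I3 = true) ∨
       ((u : ℕ) = (v : ℕ) - m ∧ Even (u : ℕ)))))

/-- The ordered graph `M^>_I(X,Y)`: as `M^<_I(X,Y)` but with the `y`-indices reversed,
i.e. vertex `m + p` plays the role of `y_{m-p}` (so that `y_1 > y_2 > … > y_m`). -/
def Mgt (m : ℕ) (I1 I2 I3 I4 : Bool) : SimpleGraph (Fin (2 * m)) :=
  SimpleGraph.fromRel (fun u v =>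
    ((u : ℕ) < m ∧ (v : ℕ) < m ∧ I1 = true) ∨
    (m ≤ (u : ℕ) ∧ m ≤ (v : ℕ) ∧ I4 = true) ∨
    ((u : ℕ) < m ∧ m ≤ (v : ℕ) ∧
      (((u : ℕ) < 2 * m - 1 - (v : ℕ) ∧ I2 = true) ∨
       (2 * m - 1 - (v : ℕ) < (u : ℕ) ∧ I3 = true) ∨
       ((u : ℕ) = 2 * m - 1 - (v : ℕ) ∧ Even (u : ℕ)))))

/-- `B` is a set of consecutive vertices which is pairwise 1-homogeneous. -/
def IsHomInterval {N : ℕ} (G : SimpleGraph (Fin N)) (B : Set (Fin N)) : Prop :=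
  (∀ x y z : Fin N, x ∈ B → z ∈ B → x ≤ y → y ≤ z → y ∈ B) ∧
  (∀ x ∈ B, ∀ y ∈ B, lHom G 1 x y)

/-- A homogeneous block of `G`: a maximal 1-homogeneous set of consecutive vertices. -/
def IsHomBlock {N : ℕ} (G : SimpleGraph (Fin N)) (B : Set (Fin N)) : Prop :=
  B.Nonempty ∧ IsHomInterval G B ∧ ∀ B' : Set (Fin N), B ⊆ B' → IsHomInterval G B' → B = B'

/-- `G` has at most `k` homogeneous blocks. -/
def HomBlocksLE {N : ℕ} (G : SimpleGraph (Fin N)) (k : ℕ) : Prop :=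
  {B : Set (Fin N) | IsHomBlock G B}.ncard ≤ k

/-- `TailBound G k M` : the homogeneous block sequence `t_1 ≥ t_2 ≥ …` of `G` satisfies
`Σ_{i=k+2}^∞ t_i ≤ M`, i.e. some (equivalently, the largest) `k+1` homogeneous blocks
cover all but at most `M` vertices. -/
def TailBound {N : ℕ} (G : SimpleGraph (Fin N)) (k M : ℕ) : Prop :=
  ∃ S : Finset (Set (Fin N)), S.card ≤ k + 1 ∧ (∀ B ∈ S, IsHomBlock G B) ∧
    {v : Fin N | ∀ B ∈ S, v ∉ B}.ncard ≤ M

/-- An ordered graph is irreducible if no pair of vertices `u < v` separates its edges. -/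
def IrredGraph {N : ℕ} (G : SimpleGraph (Fin N)) : Prop :=
  ¬ ∃ u v : Fin N, u < v ∧
      ∀ i j : Fin N, i < j → G.Adj i j → ((j : ℕ) ≤ (u : ℕ) ∨ (v : ℕ) ≤ (i : ℕ))

/-- `G` is `ℓ`-empty: it has no edges of length at least `ℓ`. -/
def lEmpty {N : ℕ} (G : SimpleGraph (Fin N)) (ℓ : ℕ) : Prop :=
  ∀ u v : Fin N, G.Adj u v → ((u : ℤ) - (v : ℤ)).natAbs < ℓ

/-- `IsFamSum G sz Gs` : `G = G_1 + … + G_s`, the consecutive sum of the ordered graphs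
`Gs 0, …, Gs (s-1)` (of orders `sz 0, …, sz (s-1)`), with no edges between summands. -/
def IsFamSum {N s : ℕ} (G : SimpleGraph (Fin N)) (sz : Fin s → ℕ)
    (Gs : ∀ i, SimpleGraph (Fin (sz i))) : Prop :=
  N = ∑ i, sz i ∧
  ∀ u v : Fin N, G.Adj u v ↔ ∃ (i : Fin s) (x y : Fin (sz i)),
    (Gs i).Adj x y ∧
    (u : ℕ) = (∑ j ∈ Finset.univ.filter (fun j => j < i), sz j) + (x : ℕ) ∧
    (v : ℕ) = (∑ j ∈ Finset.univ.filter (fun j => j < i), sz j) + (y : ℕ)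

/-- `(Gs 0, …, Gs (s-1))` is the irreducible block decomposition of `G`:
`G = G_1 + ⋯ + G_s` with every block nonempty and irreducible.  (Such a
decomposition is unique.) -/
def IsIrredDecomp {N s : ℕ} (G : SimpleGraph (Fin N)) (sz : Fin s → ℕ)
    (Gs : ∀ i, SimpleGraph (Fin (sz i))) : Prop :=
  IsFamSum G sz Gs ∧ (∀ i, 1 ≤ sz i) ∧ ∀ i, IrredGraph (Gs i)

/-- `J_1^{(n)} = K_n`. -/
def Jgraph1 (n : ℕ) : SimpleGraph (Fin n) := ⊤

/-- `J_2^{(n)}` : single edge `{1,n}`. -/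
def Jgraph2 (n : ℕ) : SimpleGraph (Fin n) :=
  SimpleGraph.fromRel (fun u v => (u : ℕ) = 0 ∧ (v : ℕ) = n - 1)

/-- `J_3^{(n)}` : star at the first vertex. -/
def Jgraph3 (n : ℕ) : SimpleGraph (Fin n) :=
  SimpleGraph.fromRel (fun u _ => (u : ℕ) = 0)

/-- `J_4^{(n)}` : star at the last vertex. -/
def Jgraph4 (n : ℕ) : SimpleGraph (Fin n) :=
  SimpleGraph.fromRel (fun _ v => (v : ℕ) = n - 1)

/-- `L^{(n)}` : the monotone path. -/
def Lgraph (n : ℕ) : SimpleGraph (Fin n) :=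
  SimpleGraph.fromRel (fun u v => (v : ℕ) = (u : ℕ) + 1)

/-- `Q_1` : edge set `{13, 24}` on `[4]`. -/
def Qgraph1 : SimpleGraph (Fin 4) :=
  SimpleGraph.fromRel (fun u v => ((u : ℕ) = 0 ∧ (v : ℕ) = 2) ∨ ((u : ℕ) = 1 ∧ (v : ℕ) = 3))

/-- `Q_2` : edge set `{14, 23}` on `[4]`. -/
def Qgraph2 : SimpleGraph (Fin 4) :=
  SimpleGraph.fromRel (fun u v => ((u : ℕ) = 0 ∧ (v : ℕ) = 3) ∨ ((u : ℕ) = 1 ∧ (v : ℕ) = 2))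

/-- `G` is order-isomorphic to a member of the family `𝒥`. -/
def InJ {n : ℕ} (G : SimpleGraph (Fin n)) : Prop :=
  G = Jgraph1 n ∨ G = Jgraph2 n ∨ G = Jgraph3 n ∨ G = Jgraph4 n ∨ G = Lgraph n ∨
  (n = 4 ∧ IndSub G Qgraph1) ∨ (n = 4 ∧ IndSub G Qgraph2)

/-- `G` is order-isomorphic to a member of `𝒥_ℓ`. -/
def InJle (ℓ : ℕ) {n : ℕ} (G : SimpleGraph (Fin n)) : Prop :=
  (n ≤ ℓ ∧ (G = Jgraph1 n ∨ G = Jgraph2 n ∨ G = Jgraph3 n ∨ G = Jgraph4 n ∨ G = Lgraph n)) ∨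
  (4 ≤ ℓ ∧ n = 4 ∧ (IndSub G Qgraph1 ∨ IndSub G Qgraph2))

/-- `A` is a sum `B_1 + ⋯ + B_t` of members of `𝒥_ℓ` which are pairwise comparable in
the induced ordered subgraph order. -/
def InJA (ℓ : ℕ) {n : ℕ} (A : SimpleGraph (Fin n)) : Prop :=
  ∃ (t : ℕ) (sz : Fin t → ℕ) (Bs : ∀ j, SimpleGraph (Fin (sz j))),
    IsFamSum A sz Bs ∧ (∀ j, InJle ℓ (Bs j)) ∧
    ∀ j j', IndSub (Bs j) (Bs j') ∨ IndSub (Bs j') (Bs j)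

/-- `G ∈ 𝒥(k,ℓ)`. -/
def InJkl (k ℓ : ℕ) {n : ℕ} (G : SimpleGraph (Fin n)) : Prop :=
  ∃ (s : ℕ) (sz : Fin s → ℕ) (As : ∀ i, SimpleGraph (Fin (sz i))),
    s ≤ k ∧ IsFamSum G sz As ∧ ∀ i, InJA ℓ (As i)

section XAux
-- genFib basics
lemma genFib_succ (k n : ℕ) : genFib k (n+1) = ∑ i ∈ Finset.range k, if i ≤ n then genFib k (n - i) else 0 := by
  rw [genFib]

lemma genFib_mul_le (k : ℕ) : ∀ b a, genFib k a * genFib k b ≤ genFib k (a + b) := by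
  intro b
  induction b using Nat.strong_induction_on with
  | _ b ih =>
    intro a
    match b with
    | 0 => simp [genFib]
    | Nat.succ b =>
      rw [genFib_succ, Finset.mul_sum, show a + (b+1) = (a+b)+1 from rfl, genFib_succ]
      refine Finset.sum_le_sum fun i hi => ?_
      by_cases h : i ≤ b
      · rw [if_pos h, if_pos (by omega : i ≤ a + b)]
        have := ih (b - i) (by omega) a
        rwa [show a + (b - i) = a + b - i from by omega] at this
      · simp [h]

lemma genFib_prod_le (k : ℕ) {ι : Type*} (s : Finset ι) (f : ι → ℕ) :
    ∏ i ∈ s, genFib k (f i) ≤ genFib k (∑ i ∈ s, f i) := by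
  classical
  induction s using Finset.cons_induction with
  | empty => simp [genFib]
  | cons i s hi ih =>
    rw [Finset.prod_cons, Finset.sum_cons]
    calc genFib k (f i) * ∏ j ∈ s, genFib k (f j) ≤ genFib k (f i) * genFib k (∑ j ∈ s, f j) :=
          Nat.mul_le_mul_left _ ih
      _ ≤ _ := genFib_mul_le k _ _

-- compositions
def comps (ℓ : ℕ) : ℕ → Finset (List ℕ)
  | 0 => {[]}
  | m+1 => (Finset.range ℓ).biUnion fun i =>
      if h : i ≤ m then (comps ℓ (m-i)).image (List.cons (i+1)) else ∅
decreasing_by omega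

lemma card_comps_le (ℓ : ℕ) : ∀ m, (comps ℓ m).card ≤ genFib ℓ m := by
  intro m
  induction m using Nat.strong_induction_on with
  | _ m ih =>
    match m with
    | 0 => simp [comps, genFib]
    | Nat.succ m =>
      rw [comps, genFib_succ]
      refine Finset.card_biUnion_le.trans (Finset.sum_le_sum fun i hi => ?_)
      by_cases h : i ≤ m
      · rw [dif_pos h, if_pos h]
        exact Finset.card_image_le.trans (ih _ (by omega))
      · simp [h]

lemma mem_comps (ℓ : ℕ) : ∀ (c : List ℕ), (∀ q ∈ c, 1 ≤ q ∧ q ≤ ℓ) → c ∈ comps ℓ c.sum := by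
  intro c
  induction c with
  | nil => intro _; simp [comps]
  | cons q c ih =>
    intro h
    have hq := h q (by simp)
    have hsum : (q :: c).sum = (q - 1 + c.sum) + 1 := by simp [List.sum_cons]; omega
    rw [hsum, comps]
    refine Finset.mem_biUnion.2 ⟨q - 1, Finset.mem_range.2 (by omega), ?_⟩
    rw [dif_pos (by omega : q - 1 ≤ q - 1 + c.sum)]
    refine Finset.mem_image.2 ⟨c, ?_, by rw [show q - 1 + 1 = q from by omega]⟩
    rw [show q - 1 + c.sum - (q - 1) = c.sum from by omega]
    exact ih fun p hp => h p (by simp [hp])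

lemma comps_sum (ℓ : ℕ) : ∀ m (c : List ℕ), c ∈ comps ℓ m → c.sum = m := by
  intro m
  induction m using Nat.strong_induction_on with
  | _ m ih =>
    match m with
    | 0 => intro c hc; simp [comps] at hc; simp [hc]
    | Nat.succ m =>
      intro c hc
      rw [comps] at hc
      obtain ⟨i, hi, hc⟩ := Finset.mem_biUnion.1 hc
      rw [Finset.mem_range] at hi
      by_cases h : i ≤ m
      · rw [dif_pos h] at hc
        obtain ⟨c', hc', rfl⟩ := Finset.mem_image.1 hc
        have := ih (m - i) (by omega) c' hc'
        simp [List.sum_cons, this]; omega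
      · rw [dif_neg h] at hc; exact absurd hc (Finset.notMem_empty _)

-- order embeddings of Fin
lemma strictMono_le_apply {a b : ℕ} {f : Fin a → Fin b} (hf : StrictMono f) :
    ∀ n (i : Fin a), (i : ℕ) = n → n ≤ (f i : ℕ) := by
  intro n
  induction n with
  | zero => intro i _; exact Nat.zero_le _
  | succ n ihn =>
    intro i hi
    have hn : n < a := by omega
    have h1 := ihn ⟨n, hn⟩ rfl
    have h2 : f ⟨n, hn⟩ < f i := hf (by simp [Fin.lt_def, hi])
    have := Fin.lt_def.mp h2
    omega

lemma orderEmb_fin_fix {a : ℕ} (φ : Fin a ↪o Fin a) (i : Fin a) : φ i = i := by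
  have hbij : Function.Bijective φ := Finite.injective_iff_bijective.mp φ.injective
  obtain ⟨g, hg1, hg2⟩ := Function.bijective_iff_has_inverse.mp hbij
  have hgmono : StrictMono g := by
    intro u v huv
    rcases lt_trichotomy (g u) (g v) with h | h | h
    · exact h
    · exfalso; rw [← hg2 u, ← hg2 v, h] at huv; exact lt_irrefl _ huv
    · exfalso
      have h2 := φ.strictMono h
      rw [hg2, hg2] at h2
      exact absurd huv (not_lt.2 h2.le)
  have h1 := strictMono_le_apply φ.strictMono (i : ℕ) i rfl
  have h2 := strictMono_le_apply hgmono ((φ i : Fin a) : ℕ) (φ i) rfl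
  rw [hg1] at h2
  exact Fin.ext (le_antisymm h2 h1)

lemma indSub_same {q : ℕ} {B B' : SimpleGraph (Fin q)} (h : IndSub B B') : B = B' := by
  obtain ⟨φ, hφ⟩ := h
  ext u v
  have := hφ u v
  rwa [orderEmb_fin_fix φ u, orderEmb_fin_fix φ v] at this

-- block tables
noncomputable def btab {q : ℕ} (B : SimpleGraph (Fin q)) (ℓ : ℕ) : Fin ℓ → Fin ℓ → Bool :=
  fun x y => @decide (∃ (hx : (x:ℕ) < q) (hy : (y:ℕ) < q), B.Adj ⟨(x:ℕ), hx⟩ ⟨(y:ℕ), hy⟩)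
    (Classical.propDecidable _)

lemma btab_true_iff {q ℓ : ℕ} (B : SimpleGraph (Fin q)) (x y : Fin ℓ) :
    btab B ℓ x y = true ↔ ∃ (hx : (x:ℕ) < q) (hy : (y:ℕ) < q), B.Adj ⟨(x:ℕ), hx⟩ ⟨(y:ℕ), hy⟩ := by
  unfold btab
  exact @decide_eq_true_iff _ (Classical.propDecidable _)

lemma btab_eq {q q' ℓ : ℕ} (hq : q = q') {B : SimpleGraph (Fin q)} {B' : SimpleGraph (Fin q')}
    (h : IndSub B B') : btab B ℓ = btab B' ℓ := by
  subst hq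
  rw [indSub_same h]

end XAux

section XAux2
open Finset

/-- Generic "consecutive-sum adjacency" predicate. -/
def EAdj (f : ℕ → ℕ) (P : ℕ → ℕ → ℕ → Prop) (t u v : ℕ) : Prop :=
  ∃ j, j < t ∧ ∃ x y, P j x y ∧
    u = (∑ r ∈ Finset.range j, f r) + x ∧ v = (∑ r ∈ Finset.range j, f r) + y

lemma EAdj_congr {f f' : ℕ → ℕ} {P P' : ℕ → ℕ → ℕ → Prop} {t u v : ℕ}
    (hf : ∀ r, r < t → f r = f' r) (hP : ∀ j x y, j < t → (P j x y ↔ P' j x y)) :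
    EAdj f P t u v ↔ EAdj f' P' t u v := by
  have hsum : ∀ j, j < t → (∑ r ∈ Finset.range j, f r) = ∑ r ∈ Finset.range j, f' r := by
    intro j hj
    exact Finset.sum_congr rfl fun r hr => hf r (lt_of_lt_of_le (Finset.mem_range.1 hr) hj.le)
  constructor
  · rintro ⟨j, hj, x, y, hQ, hu, hv⟩
    exact ⟨j, hj, x, y, (hP j x y hj).1 hQ, by rw [← hsum j hj]; exact hu,
      by rw [← hsum j hj]; exact hv⟩
  · rintro ⟨j, hj, x, y, hQ, hu, hv⟩
    exact ⟨j, hj, x, y, (hP j x y hj).2 hQ, by rw [hsum j hj]; exact hu,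
      by rw [hsum j hj]; exact hv⟩

lemma EAdj_extend {f : ℕ → ℕ} {P : ℕ → ℕ → ℕ → Prop} {t t' u v : ℕ} (h : t ≤ t')
    (hP : ∀ j x y, t ≤ j → ¬ P j x y) : EAdj f P t u v ↔ EAdj f P t' u v := by
  constructor
  · rintro ⟨j, hj, x, y, hQ, hu, hv⟩
    exact ⟨j, lt_of_lt_of_le hj h, x, y, hQ, hu, hv⟩
  · rintro ⟨j, hj, x, y, hQ, hu, hv⟩
    by_cases hjt : j < t
    · exact ⟨j, hjt, x, y, hQ, hu, hv⟩
    · exact absurd hQ (hP j x y (by omega))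

/-- Padded size function. -/
def padf {s : ℕ} (sz : Fin s → ℕ) : ℕ → ℕ := fun j => if h : j < s then sz ⟨j, h⟩ else 0

lemma sum_filter_lt {s : ℕ} (sz : Fin s → ℕ) (i : Fin s) :
    ∑ j ∈ Finset.univ.filter (fun j => j < i), sz j = ∑ r ∈ Finset.range (i:ℕ), padf sz r := by
  have h1 : ∑ j ∈ Finset.univ.filter (fun j => j < i), sz j
      = ∑ r ∈ Finset.range s, (if h : r < s then (if r < (i:ℕ) then sz ⟨r, h⟩ else 0) else 0) := by
    rw [Finset.sum_filter, ← Fin.sum_univ_eq_sum_range]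
    refine Finset.sum_congr rfl fun j _ => ?_
    rw [dif_pos j.isLt]
    by_cases hj : j < i
    · rw [if_pos hj, if_pos (Fin.lt_def.mp hj)]
    · rw [if_neg hj, if_neg (fun h => hj (Fin.lt_def.mpr h))]
  rw [h1, show Finset.range (i:ℕ) = (Finset.range s).filter (· < (i:ℕ)) from by
    ext r; simp [Finset.mem_filter, Finset.mem_range]; omega, Finset.sum_filter]
  refine Finset.sum_congr rfl fun r hr => ?_
  rw [Finset.mem_range] at hr
  rw [dif_pos hr]
  by_cases hri : r < (i:ℕ)
  · rw [if_pos hri, if_pos hri]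
    show sz ⟨r, hr⟩ = padf sz r
    unfold padf
    rw [dif_pos hr]
  · rw [if_neg hri, if_neg hri]

/-- The blockwise predicate coming from a family sum. -/
def PFam {s : ℕ} (sz : Fin s → ℕ) (Gs : ∀ i, SimpleGraph (Fin (sz i))) : ℕ → ℕ → ℕ → Prop :=
  fun j x y => ∃ i : Fin s, (i:ℕ) = j ∧ ∃ (a b : Fin (sz i)), (a:ℕ) = x ∧ (b:ℕ) = y ∧ (Gs i).Adj a b

lemma famsum_iff_EAdj {N s : ℕ} {G : SimpleGraph (Fin N)} {sz : Fin s → ℕ}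
    {Gs : ∀ i, SimpleGraph (Fin (sz i))} (h : IsFamSum G sz Gs) (u v : Fin N) :
    G.Adj u v ↔ EAdj (padf sz) (PFam sz Gs) s (u:ℕ) (v:ℕ) := by
  rw [(h.2 u v)]
  constructor
  · rintro ⟨i, x, y, hadj, hu, hv⟩
    exact ⟨(i:ℕ), i.isLt, (x:ℕ), (y:ℕ), ⟨i, rfl, x, y, rfl, rfl, hadj⟩,
      by rw [← sum_filter_lt sz i]; exact hu, by rw [← sum_filter_lt sz i]; exact hv⟩
  · rintro ⟨j, hj, x, y, ⟨i, hij, a, b, ha, hb, hadj⟩, hu, hv⟩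
    refine ⟨i, a, b, hadj, ?_, ?_⟩
    · rw [sum_filter_lt sz i, hij, ha]; exact hu
    · rw [sum_filter_lt sz i, hij, hb]; exact hv

/-- Adjacency inside a single block of size `q`, described by a table. -/
def Q1 (ℓ : ℕ) (tab : Fin ℓ → Fin ℓ → Bool) (q x y : ℕ) : Prop :=
  x < q ∧ y < q ∧ ∃ (hq : q - 1 < ℓ) (hx : x < ℓ) (hy : y < ℓ), True ∧
    tab ⟨x, hx⟩ ⟨y, hy⟩ = true

/-- Adjacency of a consecutive sum of blocks given by a size list and size-indexed tables. -/
def LAdj (ℓ : ℕ) (tabs : Fin ℓ → Fin ℓ → Fin ℓ → Bool) (c : List ℕ) (x y : ℕ) : Prop :=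
  EAdj (fun r => c.getD r 0)
    (fun j a b => ∃ hq : c.getD j 0 - 1 < ℓ,
      Q1 ℓ (tabs ⟨c.getD j 0 - 1, hq⟩) (c.getD j 0) a b) c.length x y

lemma LAdj_nil {ℓ : ℕ} (tabs : Fin ℓ → Fin ℓ → Fin ℓ → Bool) (x y : ℕ) :
    ¬ LAdj ℓ tabs [] x y := by
  rintro ⟨j, hj, _⟩
  simp at hj

lemma LAdj_cons {ℓ : ℕ} (tabs : Fin ℓ → Fin ℓ → Fin ℓ → Bool) (q : ℕ) (c : List ℕ) (x y : ℕ) :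
    LAdj ℓ tabs (q :: c) x y ↔
      (∃ hq : q - 1 < ℓ, Q1 ℓ (tabs ⟨q - 1, hq⟩) q x y) ∨
      (q ≤ x ∧ q ≤ y ∧ LAdj ℓ tabs c (x - q) (y - q)) := by
  constructor
  · rintro ⟨j, hj, a, b, hQ, hu, hv⟩
    match j with
    | 0 =>
      simp only [Finset.range_zero, Finset.sum_empty, Nat.zero_add] at hu hv
      subst hu; subst hv
      left
      simpa using hQ
    | Nat.succ j' =>
      right
      have hsum : (∑ r ∈ Finset.range (j'+1), (q :: c).getD r 0)
          = q + ∑ r ∈ Finset.range j', c.getD r 0 := by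
        rw [Finset.sum_range_succ' (fun r => (q :: c).getD r 0) j']
        simp [Nat.add_comm]
      rw [hsum] at hu hv
      have hj' : j' < c.length := by simpa using hj
      refine ⟨by omega, by omega, j', hj', a, b, by simpa using hQ, ?_, ?_⟩
      · show x - q = (∑ r ∈ Finset.range j', c.getD r 0) + a
        omega
      · show y - q = (∑ r ∈ Finset.range j', c.getD r 0) + b
        omega
  · rintro (⟨hq, hQ⟩ | ⟨hx, hy, j', hj', a, b, hQ, hu, hv⟩)
    · exact ⟨0, by simp, x, y, by simpa using ⟨hq, hQ⟩, by simp, by simp⟩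
    · have hsum : (∑ r ∈ Finset.range (j'+1), (q :: c).getD r 0)
          = q + ∑ r ∈ Finset.range j', c.getD r 0 := by
        rw [Finset.sum_range_succ' (fun r => (q :: c).getD r 0) j']
        simp [Nat.add_comm]
      have hu' : x - q = (∑ r ∈ Finset.range j', c.getD r 0) + a := hu
      have hv' : y - q = (∑ r ∈ Finset.range j', c.getD r 0) + b := hv
      refine ⟨j'+1, by simpa using hj', a, b, by simpa using hQ, ?_, ?_⟩
      · show x = (∑ r ∈ Finset.range (j'+1), (q :: c).getD r 0) + a
        rw [hsum]; omega
      · show y = (∑ r ∈ Finset.range (j'+1), (q :: c).getD r 0) + b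
        rw [hsum]; omega

lemma LAdj_filter {ℓ : ℕ} (tabs : Fin ℓ → Fin ℓ → Fin ℓ → Bool) (c : List ℕ) (x y : ℕ) :
    LAdj ℓ tabs (c.filter (fun q => q ≠ 0)) x y ↔ LAdj ℓ tabs c x y := by
  induction c generalizing x y with
  | nil => simp [List.filter]
  | cons q c ih =>
    by_cases h : q = 0
    · subst h
      rw [show ((0 : ℕ) :: c).filter (fun q => q ≠ 0) = c.filter (fun q => q ≠ 0) from by
        simp [List.filter]]
      rw [LAdj_cons, ih]
      constructor
      · intro hl; right; simpa using hl
      · rintro (⟨hq, h0, _⟩ | ⟨_, _, hl⟩)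
        · exact absurd h0 (by omega)
        · simpa using hl
    · rw [show ((q : ℕ) :: c).filter (fun q => q ≠ 0) = q :: c.filter (fun q => q ≠ 0) from by
        simp [List.filter, h]]
      rw [LAdj_cons, LAdj_cons, ih]

lemma list_sum_eq_range (c : List ℕ) : c.sum = ∑ r ∈ Finset.range c.length, c.getD r 0 := by
  induction c with
  | nil => simp
  | cons q c ih =>
    rw [List.sum_cons, List.length_cons, Finset.sum_range_succ' (fun r => (q :: c).getD r 0)]
    simp [ih, Nat.add_comm]

lemma LAdj_lt {ℓ : ℕ} {tabs : Fin ℓ → Fin ℓ → Fin ℓ → Bool} {c : List ℕ} {x y : ℕ}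
    (h : LAdj ℓ tabs c x y) : x < c.sum ∧ y < c.sum := by
  obtain ⟨j, hj, a, b, ⟨hq, ha, hb, _⟩, hu, hv⟩ := h
  have hu' : x = (∑ r ∈ Finset.range j, c.getD r 0) + a := hu
  have hv' : y = (∑ r ∈ Finset.range j, c.getD r 0) + b := hv
  have h1 : (∑ r ∈ Finset.range j, c.getD r 0) + c.getD j 0 ≤ c.sum := by
    rw [list_sum_eq_range, ← Finset.sum_range_succ]
    exact Finset.sum_le_sum_of_subset (Finset.range_subset_range.2 (by omega))
  omega

lemma filter_ne_zero_sum (c : List ℕ) : (c.filter (fun q => q ≠ 0)).sum = c.sum := by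
  induction c with
  | nil => rfl
  | cons q c ih =>
    by_cases h : q = 0
    · subst h; simpa [List.filter] using ih
    · rw [show List.filter (fun q => decide (q ≠ 0)) (q :: c) = q :: List.filter (fun q => decide (q ≠ 0)) c from by
        rw [List.filter_cons, if_pos (by simpa using h)], List.sum_cons, List.sum_cons, ih]

lemma getD_map_range (t r : ℕ) (f : ℕ → ℕ) :
    ((List.range t).map f).getD r 0 = if r < t then f r else 0 := by
  by_cases h : r < t
  · simp [List.getD_eq_getElem?_getD, List.getElem?_map, List.getElem?_range, h]
  · rw [if_neg h, List.getD_eq_getElem?_getD, List.getElem?_eq_none (by simpa using by omega)]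
    rfl

end XAux2

section XAux3
open Finset

lemma InJle_le {ℓ nB : ℕ} {B : SimpleGraph (Fin nB)} (h : InJle ℓ B) : nB ≤ ℓ := by
  rcases h with ⟨h1, _⟩ | ⟨h1, h2, _⟩ <;> omega

lemma part_code {ℓ m : ℕ} {A : SimpleGraph (Fin m)} (hA : InJA ℓ A) :
    ∃ c ∈ comps ℓ m, ∃ tabs : Fin ℓ → Fin ℓ → Fin ℓ → Bool,
      ∀ u v : Fin m, A.Adj u v ↔ LAdj ℓ tabs c (u:ℕ) (v:ℕ) := by
  classical
  obtain ⟨t, szB, Bs, hfam, hin, hcomp⟩ := hA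
  have hle : ∀ j, szB j ≤ ℓ := fun j => InJle_le (hin j)
  have hbt : ∀ j j' : Fin t, szB j = szB j' → btab (Bs j) ℓ = btab (Bs j') ℓ := by
    intro j j' hq
    rcases hcomp j j' with h | h
    · exact btab_eq hq h
    · exact (btab_eq hq.symm h).symm
  set c₀ : List ℕ := (List.range t).map (padf szB) with hc₀
  have hlen : c₀.length = t := by simp [hc₀]
  have hgetD : ∀ j (hj : j < t), c₀.getD j 0 = szB ⟨j, hj⟩ := by
    intro j hj
    rw [hc₀, getD_map_range, if_pos hj]
    unfold padf
    rw [dif_pos hj]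
  set tabs : Fin ℓ → Fin ℓ → Fin ℓ → Bool := fun qm =>
    if h : ∃ j : Fin t, szB j = (qm:ℕ) + 1 then btab (Bs h.choose) ℓ else fun _ _ => false
    with htabs
  have htabval : ∀ (j : Fin t) (h1 : 1 ≤ szB j) (hq : szB j - 1 < ℓ),
      tabs ⟨szB j - 1, hq⟩ = btab (Bs j) ℓ := by
    intro j h1 hq
    have hex : ∃ j' : Fin t, szB j' = ((⟨szB j - 1, hq⟩ : Fin ℓ) : ℕ) + 1 :=
      ⟨j, by simp; omega⟩
    have hc2 : szB hex.choose = szB j := by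
      have := hex.choose_spec; simp at this; omega
    rw [htabs]
    simp only
    rw [dif_pos hex]
    exact (hbt j hex.choose hc2.symm).symm
  have key : ∀ j x y, j < t →
      (PFam szB Bs j x y ↔ ∃ hq : c₀.getD j 0 - 1 < ℓ,
        Q1 ℓ (tabs ⟨c₀.getD j 0 - 1, hq⟩) (c₀.getD j 0) x y) := by
    intro j x y hj
    rw [hgetD j hj]
    constructor
    · rintro ⟨i, hij, a, b, ha, hb, hadj⟩
      have hi : i = ⟨j, hj⟩ := Fin.ext hij
      subst hi
      subst ha; subst hb
      have h1 : 1 ≤ szB ⟨j, hj⟩ := a.pos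
      have hq : szB ⟨j, hj⟩ - 1 < ℓ := by have := hle ⟨j, hj⟩; omega
      have hxq : (a:ℕ) < szB ⟨j, hj⟩ := a.isLt
      have hyq : (b:ℕ) < szB ⟨j, hj⟩ := b.isLt
      have hxl : (a:ℕ) < ℓ := by have := hle ⟨j, hj⟩; omega
      have hyl : (b:ℕ) < ℓ := by have := hle ⟨j, hj⟩; omega
      refine ⟨hq, hxq, hyq, hq, hxl, hyl, trivial, ?_⟩
      rw [htabval ⟨j, hj⟩ h1 hq]
      exact (btab_true_iff (Bs ⟨j, hj⟩) ⟨(a:ℕ), hxl⟩ ⟨(b:ℕ), hyl⟩).2 ⟨hxq, hyq, hadj⟩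
    · rintro ⟨hq, hxq, hyq, _, hx, hy, _, htab⟩
      have h1 : 1 ≤ szB ⟨j, hj⟩ := by omega
      rw [htabval ⟨j, hj⟩ h1 hq] at htab
      obtain ⟨hx', hy', hadj⟩ := (btab_true_iff (Bs ⟨j, hj⟩) ⟨x, hx⟩ ⟨y, hy⟩).1 htab
      exact ⟨⟨j, hj⟩, rfl, ⟨x, hx'⟩, ⟨y, hy'⟩, rfl, rfl, hadj⟩
  have hsum0 : c₀.sum = m := by
    rw [list_sum_eq_range, hlen]
    have h1 : ∑ r ∈ Finset.range t, c₀.getD r 0 = ∑ r ∈ Finset.range t, padf szB r :=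
      Finset.sum_congr rfl fun r hr => by
        rw [hc₀, getD_map_range, if_pos (Finset.mem_range.1 hr)]
    rw [h1, ← Fin.sum_univ_eq_sum_range (padf szB) t]
    have h2 : ∑ j : Fin t, padf szB (j:ℕ) = ∑ j : Fin t, szB j :=
      Finset.sum_congr rfl fun j _ => by unfold padf; rw [dif_pos j.isLt]
    rw [h2]
    exact hfam.1.symm
  refine ⟨c₀.filter (fun q => q ≠ 0), ?_, tabs, ?_⟩
  · have hment : ∀ q ∈ c₀.filter (fun q => q ≠ 0), 1 ≤ q ∧ q ≤ ℓ := by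
      intro q hq
      obtain ⟨hq0, hqne⟩ := List.mem_filter.1 hq
      obtain ⟨r, hr, rfl⟩ := List.mem_map.1 hq0
      rw [List.mem_range] at hr
      refine ⟨by simp at hqne; omega, ?_⟩
      show padf szB r ≤ ℓ
      unfold padf
      rw [dif_pos hr]
      exact hle _
    have hmem := mem_comps ℓ _ hment
    rwa [show (c₀.filter (fun q => q ≠ 0)).sum = m from by
      rw [filter_ne_zero_sum, hsum0]] at hmem
  · intro u v
    rw [famsum_iff_EAdj hfam u v, LAdj_filter tabs c₀]
    show _ ↔ EAdj (fun r => c₀.getD r 0)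
      (fun j a b => ∃ hq : c₀.getD j 0 - 1 < ℓ,
        Q1 ℓ (tabs ⟨c₀.getD j 0 - 1, hq⟩) (c₀.getD j 0) a b) c₀.length (u:ℕ) (v:ℕ)
    rw [hlen]
    exact EAdj_congr (fun r hr => by
      show padf szB r = c₀.getD r 0
      exact (hgetD r hr).symm ▸ (by unfold padf; rw [dif_pos hr])) key
end XAux3

section XAux4
open Finset

def GPred (k ℓ n : ℕ) (f : Fin k → Fin (n+1))
    (parts : Fin k → List ℕ × (Fin ℓ → Fin ℓ → Fin ℓ → Bool)) (u v : ℕ) : Prop :=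
  EAdj (fun r => if h : r < k then ((f ⟨r, h⟩ : ℕ)) else 0)
    (fun j x y => ∃ h : j < k, LAdj ℓ (parts ⟨j, h⟩).2 (parts ⟨j, h⟩).1 x y) k u v

lemma master {k ℓ n : ℕ} {G : SimpleGraph (Fin n)} (hG : InJkl k ℓ G) :
    ∃ (f : Fin k → Fin (n+1)) (parts : Fin k → List ℕ × (Fin ℓ → Fin ℓ → Fin ℓ → Bool)),
      (∑ i, (f i : ℕ)) = n ∧ (∀ i, (parts i).1 ∈ comps ℓ (f i : ℕ)) ∧
      ∀ u v : Fin n, G.Adj u v ↔ GPred k ℓ n f parts (u:ℕ) (v:ℕ) := by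
  classical
  obtain ⟨s, sz, As, hs, hfam, hpartsJ⟩ := hG
  choose c hc tabs htabs using fun i => part_code (hpartsJ i)
  have hszn : ∀ i, sz i ≤ n := by
    intro i
    rw [hfam.1]
    exact Finset.single_le_sum (f := fun i => sz i) (fun _ _ => Nat.zero_le _)
      (Finset.mem_univ i)
  set f : Fin k → Fin (n+1) := fun i =>
    if h : (i:ℕ) < s then ⟨sz ⟨(i:ℕ), h⟩, Nat.lt_succ_of_le (hszn _)⟩
    else ⟨0, Nat.succ_pos n⟩ with hfdef
  set parts : Fin k → List ℕ × (Fin ℓ → Fin ℓ → Fin ℓ → Bool) := fun i =>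
    if h : (i:ℕ) < s then (c ⟨(i:ℕ), h⟩, tabs ⟨(i:ℕ), h⟩)
    else ([], fun _ _ _ => false) with hpdef
  have hfval : ∀ (i : Fin k) (h : (i:ℕ) < s), (f i : ℕ) = sz ⟨(i:ℕ), h⟩ := by
    intro i h
    rw [hfdef]
    simp only
    rw [dif_pos h]
  have hfval0 : ∀ (i : Fin k), ¬ (i:ℕ) < s → (f i : ℕ) = 0 := by
    intro i h
    rw [hfdef]
    simp only
    rw [dif_neg h]
  have hpval : ∀ (i : Fin k) (h : (i:ℕ) < s),
      parts i = (c ⟨(i:ℕ), h⟩, tabs ⟨(i:ℕ), h⟩) := by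
    intro i h
    rw [hpdef]
    simp only
    rw [dif_pos h]
  have hpval0 : ∀ (i : Fin k), ¬ (i:ℕ) < s → parts i = ([], fun _ _ _ => false) := by
    intro i h
    rw [hpdef]
    simp only
    rw [dif_neg h]
  refine ⟨f, parts, ?_, ?_, ?_⟩
  · -- sum of sizes
    have h1 : ∑ i : Fin k, (f i : ℕ) = ∑ r ∈ Finset.range k, padf sz r := by
      rw [← Fin.sum_univ_eq_sum_range (padf sz) k]
      refine Finset.sum_congr rfl fun i _ => ?_
      by_cases h : (i:ℕ) < s
      · rw [hfval i h]
        show _ = padf sz (i:ℕ)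
        unfold padf
        rw [dif_pos h]
      · rw [hfval0 i h]
        show _ = padf sz (i:ℕ)
        unfold padf
        rw [dif_neg h]
    rw [h1, ← Finset.sum_subset (Finset.range_subset_range.2 hs)
      (fun r _ hr => by unfold padf; rw [dif_neg (by simpa using hr)])]
    rw [← Fin.sum_univ_eq_sum_range (padf sz) s]
    rw [Finset.sum_congr rfl (fun j (_ : j ∈ Finset.univ) => by
      show padf sz (j:ℕ) = sz j
      unfold padf
      rw [dif_pos j.isLt])]
    exact hfam.1.symm
  · -- parts membership
    intro i
    by_cases h : (i:ℕ) < s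
    · rw [hpval i h, hfval i h]
      exact hc _
    · rw [hpval0 i h, hfval0 i h]
      simp [comps]
  · -- adjacency characterization
    intro u v
    rw [famsum_iff_EAdj hfam u v]
    have hPFalse : ∀ j x y, s ≤ j → ¬ PFam sz As j x y := by
      rintro j x y hj ⟨i, hij, _⟩
      have := i.isLt
      omega
    rw [EAdj_extend hs hPFalse]
    show _ ↔ EAdj (fun r => if h : r < k then ((f ⟨r, h⟩ : ℕ)) else 0)
      (fun j x y => ∃ h : j < k, LAdj ℓ (parts ⟨j, h⟩).2 (parts ⟨j, h⟩).1 x y) k (u:ℕ) (v:ℕ)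
    refine EAdj_congr (fun r hr => ?_) (fun j x y hj => ?_)
    · rw [dif_pos hr]
      by_cases h : r < s
      · unfold padf
        rw [dif_pos h, hfval ⟨r, hr⟩ h]
      · unfold padf
        rw [dif_neg h, hfval0 ⟨r, hr⟩ h]
    · by_cases h : j < s
      · constructor
        · rintro ⟨i, hij, a, b, ha, hb, hadj⟩
          have hi : i = ⟨j, h⟩ := Fin.ext hij
          subst hi
          refine ⟨hj, ?_⟩
          rw [hpval ⟨j, hj⟩ h]
          rw [← ha, ← hb]
          exact (htabs ⟨j, h⟩ a b).1 hadj
        · rintro ⟨hjk, hL⟩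
          rw [hpval ⟨j, hjk⟩ h] at hL
          have hlt := LAdj_lt hL
          rw [comps_sum ℓ _ _ (hc ⟨j, h⟩)] at hlt
          refine ⟨⟨j, h⟩, rfl, ⟨x, hlt.1⟩, ⟨y, hlt.2⟩, rfl, rfl, ?_⟩
          exact (htabs ⟨j, h⟩ ⟨x, hlt.1⟩ ⟨y, hlt.2⟩).2 hL
      · constructor
        · rintro ⟨i, hij, _⟩
          have hi := i.isLt
          exact (h (by omega)).elim
        · rintro ⟨hjk, hL⟩
          rw [hpval0 ⟨j, hjk⟩ h] at hL
          exact absurd hL (LAdj_nil _ _ _)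
end XAux4

/-- **Lemma.**  `|𝒥(k,ℓ)_n| = O(n^{k-1}·F_{n,ℓ})` as `n → ∞`. -/
theorem size_Jkl (k ℓ : ℕ) (hk : 1 ≤ k) (hℓ : 1 ≤ ℓ) :
    ∃ C : ℕ, ∀ n : ℕ, 1 ≤ n →
      {G : SimpleGraph (Fin n) | InJkl k ℓ G}.ncard ≤ C * n ^ (k - 1) * genFib ℓ n := by
  classical
  refine ⟨2^(k-1) * (Fintype.card (Fin ℓ → Fin ℓ → Fin ℓ → Bool))^k, ?_⟩
  intro n hn
  set T := Fintype.card (Fin ℓ → Fin ℓ → Fin ℓ → Bool) with hT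
  set SzSet : Finset (Fin k → Fin (n+1)) :=
    Finset.univ.filter (fun f => (∑ i, (f i : ℕ)) = n) with hSz
  set 𝒞 : Finset ((Fin k → Fin (n+1)) × (Fin k → List ℕ × (Fin ℓ → Fin ℓ → Fin ℓ → Bool))) :=
    SzSet.biUnion (fun f => {f} ×ˢ Fintype.piFinset
      (fun i => (comps ℓ (f i : ℕ)) ×ˢ Finset.univ)) with h𝒞
  have hmain : ∀ G : {G : SimpleGraph (Fin n) // InJkl k ℓ G}, ∃ code, code ∈ 𝒞 ∧
      ∀ u v : Fin n, G.1.Adj u v ↔ GPred k ℓ n code.1 code.2 (u:ℕ) (v:ℕ) := by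
    rintro ⟨G, hG⟩
    obtain ⟨f, parts, hsum, hmem, hiff⟩ := master hG
    refine ⟨(f, parts), ?_, hiff⟩
    rw [h𝒞]
    refine Finset.mem_biUnion.2 ⟨f, Finset.mem_filter.2 ⟨Finset.mem_univ _, hsum⟩, ?_⟩
    exact Finset.mem_product.2 ⟨Finset.mem_singleton_self _,
      Fintype.mem_piFinset.2 fun i => Finset.mem_product.2 ⟨hmem i, Finset.mem_univ _⟩⟩
  choose enc henc henciff using hmain
  have hinj : Function.Injective
      (fun G : {G : SimpleGraph (Fin n) // InJkl k ℓ G} => (⟨enc G, henc G⟩ : {x // x ∈ 𝒞})) := by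
    intro G G' h
    have h2 : enc G = enc G' := congrArg Subtype.val h
    apply Subtype.ext
    ext u v
    rw [henciff G u v, h2, ← henciff G' u v]
  have h1 : {G : SimpleGraph (Fin n) | InJkl k ℓ G}.ncard ≤ 𝒞.card := by
    rw [← Nat.card_coe_set_eq, ← Nat.card_eq_finsetCard]
    exact Nat.card_le_card_of_injective _ hinj
  have h2 : 𝒞.card ≤ SzSet.card * (genFib ℓ n * T^k) := by
    rw [h𝒞]
    refine Finset.card_biUnion_le.trans ?_
    have hper : ∀ f ∈ SzSet, (({f} ×ˢ Fintype.piFinset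
        (fun i => (comps ℓ (f i : ℕ)) ×ˢ (Finset.univ : Finset (Fin ℓ → Fin ℓ → Fin ℓ → Bool)))).card
        ≤ genFib ℓ n * T^k) := by
      intro f hf
      rw [Finset.card_product, Finset.card_singleton, one_mul, Fintype.card_piFinset]
      calc ∏ i, ((comps ℓ (f i : ℕ)) ×ˢ (Finset.univ : Finset (Fin ℓ → Fin ℓ → Fin ℓ → Bool))).card
          = ∏ i, ((comps ℓ (f i : ℕ)).card * T) := by
            refine Finset.prod_congr rfl fun i _ => ?_
            rw [Finset.card_product, Finset.card_univ]
        _ = (∏ i, (comps ℓ (f i : ℕ)).card) * T^k := by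
            rw [Finset.prod_mul_distrib, Finset.prod_const, Finset.card_univ, Fintype.card_fin]
        _ ≤ (∏ i, genFib ℓ (f i : ℕ)) * T^k :=
            Nat.mul_le_mul_right _ (Finset.prod_le_prod' fun i _ => card_comps_le ℓ _)
        _ ≤ genFib ℓ (∑ i, (f i : ℕ)) * T^k :=
            Nat.mul_le_mul_right _ (genFib_prod_le ℓ _ _)
        _ = genFib ℓ n * T^k := by
            have hf2 := hf
            rw [hSz] at hf2
            rw [(Finset.mem_filter.1 hf2).2]
    exact (Finset.sum_le_sum hper).trans (by rw [Finset.sum_const, smul_eq_mul])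
  have h3 : SzSet.card ≤ (n+1)^(k-1) := by
    have hcard : SzSet.card ≤ (Finset.univ : Finset (Fin (k-1) → Fin (n+1))).card := by
      refine Finset.card_le_card_of_injOn
        (fun f => fun i : Fin (k-1) => f ⟨(i:ℕ), by omega⟩)
        (fun _ _ => Finset.mem_univ _) ?_
      intro f hf g hg hfg
      have hf2 : f ∈ SzSet := hf
      have hg2 : g ∈ SzSet := hg
      rw [hSz] at hf2 hg2
      have hsf : ∑ i, (f i : ℕ) = n := (Finset.mem_filter.1 hf2).2
      have hsg : ∑ i, (g i : ℕ) = n := (Finset.mem_filter.1 hg2).2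
      have hothers : ∀ j : Fin k, (j:ℕ) < k - 1 → f j = g j := by
        intro j hjk
        have h5 := congrFun hfg ⟨(j:ℕ), hjk⟩
        simp only at h5
        have hj : (⟨((⟨(j:ℕ), hjk⟩ : Fin (k-1)) : ℕ), by omega⟩ : Fin k) = j := Fin.ext rfl
        rwa [hj] at h5
      funext i
      by_cases hik : (i:ℕ) < k - 1
      · exact hothers i hik
      · have hothers' : ∀ j ∈ Finset.univ.erase i, (f j : ℕ) = (g j : ℕ) := by
          intro j hj
          have hji : j ≠ i := (Finset.mem_erase.1 hj).1
          have hjk : (j:ℕ) < k - 1 := by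
            have h6 := j.isLt
            have h7 := i.isLt
            rcases Nat.lt_or_ge (j:ℕ) (k-1) with h' | h'
            · exact h'
            · exact absurd (Fin.ext (by omega) : j = i) hji
          rw [hothers j hjk]
        have e1 : (f i : ℕ) + ∑ j ∈ Finset.univ.erase i, (f j : ℕ) = ∑ j, (f j : ℕ) :=
          Finset.add_sum_erase Finset.univ (fun j => ((f j : ℕ))) (Finset.mem_univ i)
        have e2 : (g i : ℕ) + ∑ j ∈ Finset.univ.erase i, (g j : ℕ) = ∑ j, (g j : ℕ) :=
          Finset.add_sum_erase Finset.univ (fun j => ((g j : ℕ))) (Finset.mem_univ i)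
        have e3 : ∑ j ∈ Finset.univ.erase i, (f j : ℕ) = ∑ j ∈ Finset.univ.erase i, (g j : ℕ) :=
          Finset.sum_congr rfl hothers'
        exact Fin.ext (by omega)
    calc SzSet.card ≤ _ := hcard
      _ = (n+1)^(k-1) := by rw [Finset.card_univ]; simp
  have h4 : (n+1)^(k-1) ≤ 2^(k-1) * n^(k-1) := by
    calc (n+1)^(k-1) ≤ (2*n)^(k-1) := Nat.pow_le_pow_left (by omega) _
      _ = 2^(k-1) * n^(k-1) := by rw [mul_pow]
  calc {G : SimpleGraph (Fin n) | InJkl k ℓ G}.ncard ≤ 𝒞.card := h1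
    _ ≤ SzSet.card * (genFib ℓ n * T^k) := h2
    _ ≤ (n+1)^(k-1) * (genFib ℓ n * T^k) := Nat.mul_le_mul_right _ h3
    _ ≤ (2^(k-1) * n^(k-1)) * (genFib ℓ n * T^k) := Nat.mul_le_mul_right _ h4
    _ = 2^(k-1) * T^k * n^(k-1) * genFib ℓ n := by ring
end

section
/- Let G_1, G_2, … be a sequence of ordered graphs, and suppose that either every G_i is irreducible, or the complement of every G_i is irreducible. Let P = {G : G is an ordered graph and G_i ≰ G for every i ∈ ℕ}. Then either the limit lim_{n→∞} |P_n|^{1/n} exists (as a finite real number), or liminf_{n→∞} |P_n|^{1/n} = ∞. -/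
open Finset

section Aux

lemma indSub_trans {a b c : ℕ} {G : SimpleGraph (Fin a)} {H : SimpleGraph (Fin b)}
    {K : SimpleGraph (Fin c)} (h1 : IndSub G H) (h2 : IndSub H K) : IndSub G K := by
  obtain ⟨φ, hφ⟩ := h1
  obtain ⟨ψ, hψ⟩ := h2
  exact ⟨φ.trans ψ, fun i j => (hφ i j).trans (hψ (φ i) (φ j))⟩

lemma indSub_compl {a b : ℕ} {G : SimpleGraph (Fin a)} {H : SimpleGraph (Fin b)}
    (h : IndSub G H) : IndSub Gᶜ Hᶜ := by
  obtain ⟨φ, hφ⟩ := h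
  refine ⟨φ, fun i j => ?_⟩
  simp only [SimpleGraph.compl_adj]
  constructor
  · rintro ⟨hne, hna⟩
    exact ⟨fun e => hne (φ.injective e), fun ha => hna ((hφ i j).2 ha)⟩
  · rintro ⟨hne, hna⟩
    exact ⟨fun e => hne (congrArg φ e), fun ha => hna ((hφ i j).1 ha)⟩

/-- The ordered sum of two ordered graphs. -/
def gsum {m n : ℕ} (G : SimpleGraph (Fin m)) (H : SimpleGraph (Fin n)) :
    SimpleGraph (Fin (m + n)) where
  Adj u v :=
    (∃ (hu : (u : ℕ) < m) (hv : (v : ℕ) < m), G.Adj ⟨u, hu⟩ ⟨v, hv⟩) ∨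
    (∃ (hu : m ≤ (u : ℕ)) (hv : m ≤ (v : ℕ)),
      H.Adj ⟨(u : ℕ) - m, by have := u.isLt; omega⟩ ⟨(v : ℕ) - m, by have := v.isLt; omega⟩)
  symm := by
    constructor
    rintro u v (⟨hu, hv, h⟩ | ⟨hu, hv, h⟩)
    · exact Or.inl ⟨hv, hu, h.symm⟩
    · exact Or.inr ⟨hv, hu, h.symm⟩
  loopless := by
    constructor
    rintro u (⟨hu, hv, h⟩ | ⟨hu, hv, h⟩)
    · exact G.loopless.irrefl _ h
    · exact H.loopless.irrefl _ h

lemma gsum_adj_left {m n : ℕ} (G : SimpleGraph (Fin m)) (H : SimpleGraph (Fin n))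
    (i j : Fin m) :
    (gsum G H).Adj ⟨(i : ℕ), by omega⟩ ⟨(j : ℕ), by omega⟩ ↔ G.Adj i j := by
  constructor
  · rintro (⟨hu, hv, h⟩ | ⟨hu, hv, h⟩)
    · simpa using h
    · simp only [Fin.val_mk] at hu; omega
  · intro h
    exact Or.inl ⟨i.isLt, j.isLt, by simpa using h⟩

lemma gsum_adj_right {m n : ℕ} (G : SimpleGraph (Fin m)) (H : SimpleGraph (Fin n))
    (i j : Fin n) :
    (gsum G H).Adj ⟨m + (i : ℕ), by omega⟩ ⟨m + (j : ℕ), by omega⟩ ↔ H.Adj i j := by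
  constructor
  · rintro (⟨hu, hv, h⟩ | ⟨hu, hv, h⟩)
    · simp only [Fin.val_mk] at hu; omega
    · convert h using 2 <;> simp
  · intro h
    exact Or.inr ⟨by simp, by simp, by convert h using 2 <;> simp⟩

lemma gsum_inj {m n : ℕ} {G G' : SimpleGraph (Fin m)} {H H' : SimpleGraph (Fin n)}
    (h : gsum G H = gsum G' H') : G = G' ∧ H = H' := by
  constructor
  · ext i j
    rw [← gsum_adj_left G H i j, ← gsum_adj_left G' H' i j, h]
  · ext i j
    rw [← gsum_adj_right G H i j, ← gsum_adj_right G' H' i j, h]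

lemma indSub_gsum_left {m n : ℕ} (G : SimpleGraph (Fin m)) (H : SimpleGraph (Fin n)) :
    IndSub G (gsum G H) := by
  refine ⟨OrderEmbedding.ofStrictMono (fun i => ⟨(i : ℕ), by omega⟩)
    (fun i j hij => by simp only [Fin.mk_lt_mk]; exact hij), fun i j => ?_⟩
  show _ ↔ (gsum G H).Adj ⟨(i : ℕ), _⟩ ⟨(j : ℕ), _⟩
  exact (gsum_adj_left G H i j).symm

lemma indSub_gsum_right {m n : ℕ} (G : SimpleGraph (Fin m)) (H : SimpleGraph (Fin n)) :
    IndSub H (gsum G H) := by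
  refine ⟨OrderEmbedding.ofStrictMono (fun i => ⟨m + (i : ℕ), by omega⟩)
    (fun i j hij => by simp only [Fin.mk_lt_mk]; exact Nat.add_lt_add_left hij m), fun i j => ?_⟩
  show _ ↔ (gsum G H).Adj ⟨m + (i : ℕ), _⟩ ⟨m + (j : ℕ), _⟩
  exact (gsum_adj_right G H i j).symm

lemma irred_indSub_gsum {k m n : ℕ} {K : SimpleGraph (Fin k)} {G : SimpleGraph (Fin m)}
    {H : SimpleGraph (Fin n)} (hK : IrredGraph K) (h : IndSub K (gsum G H)) :
    IndSub K G ∨ IndSub K H := by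
  obtain ⟨φ, hφ⟩ := h
  by_cases hall : ∀ i : Fin k, (φ i : ℕ) < m
  · left
    refine ⟨OrderEmbedding.ofStrictMono (fun i => ⟨(φ i : ℕ), hall i⟩)
      (fun i j hij => by simp only [Fin.mk_lt_mk]; exact φ.strictMono hij), fun i j => ?_⟩
    show _ ↔ G.Adj ⟨(φ i : ℕ), _⟩ ⟨(φ j : ℕ), _⟩
    rw [hφ i j]
    rw [← gsum_adj_left G H ⟨(φ i : ℕ), hall i⟩ ⟨(φ j : ℕ), hall j⟩]
  by_cases hall2 : ∀ i : Fin k, m ≤ (φ i : ℕ)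
  · right
    refine ⟨OrderEmbedding.ofStrictMono
      (fun i => ⟨(φ i : ℕ) - m, by have := (φ i).isLt; have := hall2 i; omega⟩)
      (fun i j hij => by
        have h1 := Fin.lt_def.mp (φ.strictMono hij)
        have h2 := hall2 i
        simp only [Fin.mk_lt_mk]
        omega), fun i j => ?_⟩
    show _ ↔ H.Adj ⟨(φ i : ℕ) - m, _⟩ ⟨(φ j : ℕ) - m, _⟩
    rw [hφ i j]
    rw [← gsum_adj_right G H ⟨(φ i : ℕ) - m, by have := (φ i).isLt; have := hall2 i; omega⟩
      ⟨(φ j : ℕ) - m, by have := (φ j).isLt; have := hall2 j; omega⟩]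
    have e1 : (⟨m + (((⟨(φ i : ℕ) - m, by have := (φ i).isLt; have := hall2 i; omega⟩ : Fin n)) : ℕ), by have := (φ i).isLt; omega⟩ : Fin (m + n)) = φ i :=
      Fin.ext (by simp; have := hall2 i; omega)
    have e2 : (⟨m + (((⟨(φ j : ℕ) - m, by have := (φ j).isLt; have := hall2 j; omega⟩ : Fin n)) : ℕ), by have := (φ j).isLt; omega⟩ : Fin (m + n)) = φ j :=
      Fin.ext (by simp; have := hall2 j; omega)
    rw [e1, e2]
  -- mixed case : contradiction with irreducibility
  push_neg at hall hall2
  obtain ⟨b, hb⟩ := hall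
  obtain ⟨a, ha⟩ := hall2
  exfalso
  apply hK
  classical
  have hneL : (Finset.univ.filter (fun i : Fin k => (φ i : ℕ) < m)).Nonempty :=
    ⟨a, by simp; omega⟩
  have hneR : (Finset.univ.filter (fun i : Fin k => m ≤ (φ i : ℕ))).Nonempty :=
    ⟨b, by simp; omega⟩
  set u := (Finset.univ.filter (fun i : Fin k => (φ i : ℕ) < m)).max' hneL with hu
  set v := (Finset.univ.filter (fun i : Fin k => m ≤ (φ i : ℕ))).min' hneR with hv
  have humem : (φ u : ℕ) < m := by
    have := Finset.max'_mem _ hneL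
    rw [← hu] at this
    simpa using this
  have hvmem : m ≤ (φ v : ℕ) := by
    have := Finset.min'_mem _ hneR
    rw [← hv] at this
    simpa using this
  refine ⟨u, v, ?_, ?_⟩
  · rw [← φ.lt_iff_lt, Fin.lt_def]
    omega
  · intro i j hij hadj
    rcases (hφ i j).1 hadj with ⟨h1, h2, _⟩ | ⟨h1, h2, _⟩
    · left
      have hmem : j ∈ Finset.univ.filter (fun i : Fin k => (φ i : ℕ) < m) :=
        Finset.mem_filter.mpr ⟨Finset.mem_univ _, h2⟩
      exact Fin.le_def.mp (Finset.le_max' _ j hmem)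
    · right
      have hmem : i ∈ Finset.univ.filter (fun i : Fin k => m ≤ (φ i : ℕ)) :=
        Finset.mem_filter.mpr ⟨Finset.mem_univ _, h1⟩
      exact Fin.le_def.mp (Finset.min'_le _ i hmem)

end Aux

section Part2

open Filter Real

/-- The avoidance set. -/
def Pset (f : ℕ → ℕ) (Gs : ∀ i : ℕ, SimpleGraph (Fin (f i))) (n : ℕ) :
    Set (SimpleGraph (Fin n)) :=
  {G : SimpleGraph (Fin n) | ∀ i, ¬ IndSub (Gs i) G}

lemma pset_supermult (f : ℕ → ℕ) (Gs : ∀ i : ℕ, SimpleGraph (Fin (f i)))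
    (hirr : ∀ i, IrredGraph (Gs i)) (m n : ℕ) :
    (Pset f Gs m).ncard * (Pset f Gs n).ncard ≤ (Pset f Gs (m + n)).ncard := by
  set A := Pset f Gs m
  set B := Pset f Gs n
  set F : SimpleGraph (Fin m) × SimpleGraph (Fin n) → SimpleGraph (Fin (m + n)) :=
    fun p => gsum p.1 p.2 with hF
  have himg : F '' (A ×ˢ B) ⊆ Pset f Gs (m + n) := by
    rintro S ⟨⟨G, H⟩, ⟨hG, hH⟩, rfl⟩ i hsub
    rcases irred_indSub_gsum (hirr i) hsub with h | h
    · exact hG i h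
    · exact hH i h
  have hinj : Function.Injective F := by
    rintro ⟨G, H⟩ ⟨G', H'⟩ h
    obtain ⟨h1, h2⟩ := gsum_inj h
    exact Prod.ext h1 h2
  calc A.ncard * B.ncard = (A ×ˢ B).ncard := by
        rw [← Nat.card_coe_set_eq, ← Nat.card_coe_set_eq, ← Nat.card_coe_set_eq,
          Nat.card_congr (Equiv.Set.prod A B), Nat.card_prod]
    _ = (F '' (A ×ˢ B)).ncard := (Set.ncard_image_of_injective _ hinj).symm
    _ ≤ (Pset f Gs (m + n)).ncard := Set.ncard_le_ncard himg (Set.toFinite _)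

lemma pset_zero (f : ℕ → ℕ) (Gs : ∀ i : ℕ, SimpleGraph (Fin (f i))) {m n : ℕ} (hmn : m ≤ n)
    (hm : (Pset f Gs m).ncard = 0) : (Pset f Gs n).ncard = 0 := by
  rw [Set.ncard_eq_zero (Set.toFinite _)] at hm ⊢
  by_contra hne
  obtain ⟨G, hG⟩ := Set.nonempty_iff_ne_empty.mpr hne
  have hG' : (SimpleGraph.comap (Fin.castLE hmn) G) ∈ Pset f Gs m := by
    intro i hi
    apply hG i
    refine indSub_trans hi ⟨Fin.castLEOrderEmb hmn, fun a b => Iff.rfl⟩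
  rw [hm] at hG'
  exact hG'

/-- Fekete-type dichotomy for supermultiplicative sequences. -/
lemma fekete_dichotomy (a : ℕ → ℕ) (hsuper : ∀ m n, a m * a n ≤ a (m + n))
    (hzero : ∀ m n : ℕ, m ≤ n → a m = 0 → a n = 0) :
    (∃ L : ℝ, Tendsto (fun n : ℕ => ((a n : ℝ)) ^ ((n : ℝ)⁻¹)) atTop (nhds L)) ∨
    Tendsto (fun n : ℕ => ((a n : ℝ)) ^ ((n : ℝ)⁻¹)) atTop atTop := by
  by_cases hz : ∃ n, a n = 0
  · left
    refine ⟨0, ?_⟩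
    obtain ⟨n0, hn0⟩ := hz
    have hev : ∀ᶠ n : ℕ in atTop, (0 : ℝ) = ((a n : ℝ)) ^ ((n : ℝ)⁻¹) := by
      filter_upwards [eventually_ge_atTop (max n0 1)] with n hn
      have h1 : a n = 0 := hzero n0 n (le_trans (le_max_left _ _) hn) hn0
      have h2 : (n : ℝ)⁻¹ ≠ 0 := by
        have : 1 ≤ n := le_trans (le_max_right _ _) hn
        positivity
      rw [h1]
      push_cast
      rw [Real.zero_rpow h2]
    exact Tendsto.congr' hev tendsto_const_nhds
  push_neg at hz
  have hpos : ∀ n, 1 ≤ a n := fun n => Nat.one_le_iff_ne_zero.mpr (hz n)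
  set b : ℕ → ℝ := fun n => Real.log (a n) with hbdef
  have hb0 : ∀ n, 0 ≤ b n := fun n => Real.log_nonneg (by exact_mod_cast hpos n)
  have hsub : Subadditive (fun n => -(b n)) := by
    intro m n
    have h1 : (a m : ℝ) * a n ≤ a (m + n) := by exact_mod_cast hsuper m n
    have h2 : Real.log ((a m : ℝ) * a n) ≤ Real.log (a (m + n)) := by
      apply Real.log_le_log _ h1
      have := hpos m; have := hpos n
      positivity
    rw [Real.log_mul (by have := hpos m; positivity) (by have := hpos n; positivity)] at h2
    simp only [hbdef]
    linarith
  have hfun : ∀ n : ℕ, ((a n : ℝ)) ^ ((n : ℝ)⁻¹) = Real.exp (b n / n) := by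
    intro n
    rw [Real.rpow_def_of_pos (by exact_mod_cast hpos n), div_eq_mul_inv]
  by_cases hbdd : BddBelow (Set.range fun n : ℕ => -(b n) / n)
  · left
    refine ⟨Real.exp (-hsub.lim), ?_⟩
    have h1 := hsub.tendsto_lim hbdd
    have h2 : Tendsto (fun n : ℕ => b n / n) atTop (nhds (-hsub.lim)) := by
      have := h1.neg
      simp only [neg_div, neg_neg] at this
      exact this
    have h3 := (Real.continuous_exp.tendsto _).comp h2
    exact Tendsto.congr (fun n => (hfun n).symm) h3
  · right
    have hA : Tendsto (fun n : ℕ => b n / n) atTop atTop := by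
      rw [tendsto_atTop]
      intro C
      rcases le_or_gt C 0 with hC | hC
      · filter_upwards [eventually_ge_atTop 1] with n hn
        have hn' : (0 : ℝ) < n := by exact_mod_cast hn
        have : (0 : ℝ) ≤ b n / n := div_nonneg (hb0 n) hn'.le
        linarith
      · have hnb : ¬ BddAbove (Set.range fun n : ℕ => b n / n) := by
          rintro ⟨x, hx⟩
          apply hbdd
          refine ⟨-x, ?_⟩
          rintro y ⟨n, rfl⟩
          have : b n / n ≤ x := hx ⟨n, rfl⟩
          simp only [neg_div]
          linarith
        obtain ⟨m, hm⟩ : ∃ m : ℕ, 2 * C < b m / m := by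
          by_contra h
          push_neg at h
          exact hnb ⟨2 * C, by rintro y ⟨n, rfl⟩; exact h n⟩
        have hm0 : m ≠ 0 := by
          rintro rfl
          norm_num at hm
          linarith
        have hmR : (0 : ℝ) < m := by positivity
        have hbm : 0 < b m := by
          by_contra h
          push_neg at h
          have : b m / m ≤ 0 := div_nonpos_of_nonpos_of_nonneg h hmR.le
          linarith
        filter_upwards [eventually_ge_atTop m, eventually_ge_atTop 1] with n hnm hn1
        set k := n / m with hk
        set r := n % m with hr
        have hk1 : 1 ≤ k := (Nat.one_le_div_iff (Nat.pos_of_ne_zero hm0)).mpr hnm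
        have hn_eq : k * m + r = n := by
          rw [hk, hr, mul_comm]; exact Nat.div_add_mod n m
        have h1 : (k : ℝ) * b m + b r ≤ b n := by
          have := hsub.apply_mul_add_le k m r
          rw [hn_eq] at this
          linarith
        have h2 : (k : ℝ) * b m ≤ b n := by
          have := hb0 r
          linarith
        have hn2 : (n : ℝ) ≤ 2 * m * k := by
          have hrm : r < m := Nat.mod_lt _ (Nat.pos_of_ne_zero hm0)
          have hB : m ≤ k * m := Nat.le_mul_of_pos_left m (by omega)
          have h' : n ≤ 2 * (k * m) := by omega
          calc (n : ℝ) ≤ 2 * ((k : ℝ) * m) := by exact_mod_cast h'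
            _ = 2 * m * k := by ring
        have hnR : (0 : ℝ) < n := by exact_mod_cast hn1
        rw [le_div_iff₀ hnR]
        have hkR : (0 : ℝ) < k := by exact_mod_cast hk1
        have key : 2 * C * ((m : ℝ) * k) ≤ (k : ℝ) * b m := by
          have h3 : 2 * C ≤ b m / m := hm.le
          have h4 : 2 * C * ((m : ℝ) * k) ≤ (b m / m) * ((m : ℝ) * k) := by
            apply mul_le_mul_of_nonneg_right h3
            positivity
          have h5 : (b m / m) * ((m : ℝ) * k) = (k : ℝ) * b m := by
            field_simp
          linarith
        nlinarith
    have h3 := Real.tendsto_exp_atTop.comp hA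
    exact Tendsto.congr (fun n => (hfun n).symm) h3

end Part2

section Part3
open Filter

lemma pset_compl (f : ℕ → ℕ) (Gs : ∀ i : ℕ, SimpleGraph (Fin (f i))) (n : ℕ) :
    (Pset f (fun i => (Gs i)ᶜ) n).ncard = (Pset f Gs n).ncard := by
  have hset : Pset f (fun i => (Gs i)ᶜ) n = (fun G : SimpleGraph (Fin n) => Gᶜ) '' Pset f Gs n := by
    ext G
    constructor
    · intro hG
      refine ⟨Gᶜ, fun i hi => hG i ?_, compl_compl G⟩
      have := indSub_compl hi
      rwa [compl_compl] at this
    · rintro ⟨G', hG', rfl⟩ i hi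
      have := indSub_compl hi
      simp only [compl_compl] at this
      exact hG' i this
  rw [hset]
  exact Set.ncard_image_of_injective _ compl_injective


/-- **Theorem (Fekete-type result).**  If every graph in the sequence `Gs` is
irreducible, or the complement of every graph in the sequence is irreducible, and `P`
is the property of all ordered graphs containing no `Gs i` as an induced ordered
subgraph, then either `lim (|P_n|)^{1/n}` exists, or `liminf (|P_n|)^{1/n} = ∞`
(i.e. `(|P_n|)^{1/n} → ∞`). -/
theorem limit_exists_of_forbidden_irreducibles (f : ℕ → ℕ)
    (Gs : ∀ i : ℕ, SimpleGraph (Fin (f i)))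
    (hirr : (∀ i, IrredGraph (Gs i)) ∨ (∀ i, IrredGraph (Gs i)ᶜ)) :
    (∃ L : ℝ, Filter.Tendsto
        (fun n : ℕ =>
          (({G : SimpleGraph (Fin n) | ∀ i, ¬ IndSub (Gs i) G}.ncard : ℝ)) ^ ((n : ℝ)⁻¹))
        Filter.atTop (nhds L)) ∨
    Filter.Tendsto
        (fun n : ℕ =>
          (({G : SimpleGraph (Fin n) | ∀ i, ¬ IndSub (Gs i) G}.ncard : ℝ)) ^ ((n : ℝ)⁻¹))
        Filter.atTop Filter.atTop := by
  have key : ∀ (g : ℕ → ℕ) (Hs : ∀ i : ℕ, SimpleGraph (Fin (g i))),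
      (∀ i, IrredGraph (Hs i)) →
      (∃ L : ℝ, Tendsto (fun n : ℕ => (((Pset g Hs n).ncard : ℝ)) ^ ((n : ℝ)⁻¹)) atTop (nhds L)) ∨
      Tendsto (fun n : ℕ => (((Pset g Hs n).ncard : ℝ)) ^ ((n : ℝ)⁻¹)) atTop atTop := by
    intro g Hs hirr'
    exact fekete_dichotomy (fun n => (Pset g Hs n).ncard)
      (pset_supermult g Hs hirr')
      (fun m n hmn hm => pset_zero g Hs hmn hm)
  rcases hirr with hirr | hirr
  · exact key f Gs hirr
  · have h2 := key f (fun i => (Gs i)ᶜ) hirr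
    have heq : (fun n : ℕ => (((Pset f (fun i => (Gs i)ᶜ) n).ncard : ℝ)) ^ ((n : ℝ)⁻¹)) =
        (fun n : ℕ =>
          (({G : SimpleGraph (Fin n) | ∀ i, ¬ IndSub (Gs i) G}.ncard : ℝ)) ^ ((n : ℝ)⁻¹)) := by
      funext n
      rw [pset_compl]
      rfl
    rwa [heq] at h2
end Part3
end
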